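/- arXiv:math/9807001 — 7 statements merged into one kernel-verified Lean document; each statement's English description precedes it below -/
import Mathlib

section
/- For rational numbers p/q and r/s in lowest terms (allowing ∞ = 1/0), joining p/q and r/s by a hyperbolic geodesic in the upper half plane whenever |ps - qr| = 1 gives a set of geodesics no two of which cross: if |ps - qr| = 1 and |p's' - q'r'| = 1, then the geodesics with endpoints {p/q, r/s} and {p'/q', r'/s'} either coincide, are disjoint, or meet only at a common endpoint. -/
/-- Numerator/denominator in lowest terms of an extended rational; `none` stands for `∞ = 1/0`. -/
def fareyRep : Option ℚ → ℤ × ℤ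
  | none => (1, 0)
  | some r => (r.num, (r.den : ℤ))

/-- Two extended rationals (in lowest terms) are Farey neighbors if `|p s - q r| = 1`. -/
def FareyNeighbor (x y : Option ℚ) : Prop :=
  ((fareyRep x).1 * (fareyRep y).2 - (fareyRep x).2 * (fareyRep y).1).natAbs = 1

/-- The hyperbolic geodesic in the open upper half plane with the given endpoints in
`ℝ ∪ {∞}`: a semicircle orthogonal to `ℝ` for two finite endpoints, a vertical line if one
endpoint is `∞`. -/
def fareyGeod : Option ℚ → Option ℚ → Set ℂ
  | some a, some b =>
      {z : ℂ | 0 < z.im ∧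
        ‖z - ((((a : ℝ) + (b : ℝ)) / 2 : ℝ) : ℂ)‖ = |(b : ℝ) - (a : ℝ)| / 2}
  | some a, none => {z : ℂ | 0 < z.im ∧ z.re = (a : ℝ)}
  | none, some b => {z : ℂ | 0 < z.im ∧ z.re = (b : ℝ)}
  | none, none => ∅

namespace FareyAux

theorem num_mul_lt {p u : ℚ} (h : p < u) : p.num * u.den < u.num * p.den := by
  have hp : (0:ℚ) < (p.den : ℚ) := by exact_mod_cast p.den_pos
  have hu : (0:ℚ) < (u.den : ℚ) := by exact_mod_cast u.den_pos
  have h2 : (p.num : ℚ) / p.den < (u.num : ℚ) / u.den := by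
    rw [Rat.num_div_den, Rat.num_div_den]; exact h
  have := (div_lt_div_iff₀ hp hu).mp h2
  exact_mod_cast this

theorem fn_ne {a b : ℚ} (h : FareyNeighbor (some a) (some b)) : a ≠ b := by
  rintro rfl
  unfold FareyNeighbor fareyRep at h
  simp only at h
  have : a.num * (a.den:ℤ) - (a.den:ℤ) * a.num = 0 := by ring
  omega

theorem fn_symm {a b : ℚ} (h : FareyNeighbor (some a) (some b)) :
    FareyNeighbor (some b) (some a) := by
  unfold FareyNeighbor fareyRep at *
  simp only at *
  have : b.num * (a.den : ℤ) - (b.den : ℤ) * a.num =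
      -(a.num * (b.den : ℤ) - (a.den : ℤ) * b.num) := by ring
  rw [this, Int.natAbs_neg]; exact h

/-- The denominator bound for a rational strictly between two Farey neighbors. -/
theorem between_den {p u r : ℚ} (hpr : FareyNeighbor (some p) (some r))
    (h1 : p < u) (h2 : u < r) : (p.den : ℤ) + r.den ≤ u.den := by
  have hA := num_mul_lt h1
  have hB := num_mul_lt h2
  unfold FareyNeighbor fareyRep at hpr
  simp only at hpr
  have hDpr := num_mul_lt (h1.trans h2)
  rw [show p.num * (r.den:ℤ) - (p.den:ℤ) * r.num = p.num * r.den - r.num * p.den by ring] at hpr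
  have hD1 : r.num * (p.den:ℤ) - p.num * r.den = 1 := by
    rcases Int.natAbs_eq_iff.mp hpr with h | h <;> omega
  have hpd : (1:ℤ) ≤ (p.den:ℤ) := by exact_mod_cast p.den_pos
  have hrd : (1:ℤ) ≤ (r.den:ℤ) := by exact_mod_cast r.den_pos
  have key : (u.den : ℤ) * (r.num * p.den - p.num * r.den)
      = (p.den : ℤ) * (r.num * u.den - u.num * r.den)
      + (r.den : ℤ) * (u.num * p.den - p.num * u.den) := by ring
  rw [hD1, mul_one] at key
  have hA' : (1:ℤ) ≤ u.num * p.den - p.num * u.den := by omega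
  have hB' : (1:ℤ) ≤ r.num * u.den - u.num * r.den := by omega
  nlinarith [mul_le_mul_of_nonneg_left hB' (show (0:ℤ) ≤ (p.den:ℤ) by omega),
    mul_le_mul_of_nonneg_left hA' (show (0:ℤ) ≤ (r.den:ℤ) by omega)]

/-- Farey intervals do not interleave. -/
theorem no_interleave {a b c d : ℚ} (hab : FareyNeighbor (some a) (some b))
    (hcd : FareyNeighbor (some c) (some d))
    (h1 : a < c) (h2 : c < b) (h3 : b < d) : False := by
  have H1 := between_den hab h1 h2
  have H2 := between_den hcd h2 h3
  have := a.den_pos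
  have := d.den_pos
  omega

theorem den_one_of_fn_inf {a : ℚ} (h : FareyNeighbor (some a) none) : a.den = 1 := by
  unfold FareyNeighbor fareyRep at h
  simp only at h
  omega

theorem den_one_of_inf_fn {a : ℚ} (h : FareyNeighbor none (some a)) : a.den = 1 := by
  unfold FareyNeighbor fareyRep at h
  simp only at h
  omega

theorem not_fn_inf_inf (h : FareyNeighbor none none) : False := by
  unfold FareyNeighbor fareyRep at h
  simp at h

theorem mem_circle {a b : ℚ} {z : ℂ} :
    z ∈ fareyGeod (some a) (some b) ↔
      0 < z.im ∧ (z.re - a) * (z.re - b) + z.im ^ 2 = 0 := by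
  simp only [fareyGeod, Set.mem_setOf_eq]
  refine and_congr_right fun _ => ?_
  constructor
  · intro h
    have h2 : ‖z - ((((a : ℝ) + (b : ℝ)) / 2 : ℝ) : ℂ)‖^2
        = (|(b : ℝ) - (a : ℝ)| / 2)^2 := by rw [h]
    rw [Complex.sq_norm, Complex.normSq_apply] at h2
    simp only [Complex.sub_re, Complex.ofReal_re, Complex.sub_im, Complex.ofReal_im,
      sub_zero] at h2
    have : |(b : ℝ) - (a : ℝ)|^2 = ((b:ℝ) - a)^2 := sq_abs _
    nlinarith [h2]
  · intro h
    have h2 : Complex.normSq (z - ((((a : ℝ) + (b : ℝ)) / 2 : ℝ) : ℂ))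
        = (|(b : ℝ) - (a : ℝ)| / 2)^2 := by
      rw [Complex.normSq_apply]
      simp only [Complex.sub_re, Complex.ofReal_re, Complex.sub_im, Complex.ofReal_im,
        sub_zero]
      have : |(b : ℝ) - (a : ℝ)|^2 = ((b:ℝ) - a)^2 := sq_abs _
      nlinarith [h]
    rw [Complex.norm_def, h2, Real.sqrt_sq (by positivity)]

theorem geod_symm (a b : ℚ) :
    fareyGeod (some a) (some b) = fareyGeod (some b) (some a) := by
  ext z
  rw [mem_circle, mem_circle]
  constructor <;> rintro ⟨h1, h2⟩ <;> exact ⟨h1, by nlinarith⟩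

theorem line_circle {n c d : ℚ} (hn : n.den = 1)
    (hcd : FareyNeighbor (some c) (some d)) :
    {z : ℂ | 0 < z.im ∧ z.re = (n : ℝ)} ∩ fareyGeod (some c) (some d) = ∅ := by
  rw [Set.eq_empty_iff_forall_notMem]
  rintro z ⟨⟨him, hre⟩, hz⟩
  rw [mem_circle] at hz
  obtain ⟨-, heq⟩ := hz
  rw [hre] at heq
  have hprod : ((n:ℝ) - c) * ((n:ℝ) - d) < 0 := by nlinarith
  -- so n is strictly between c and d (in some order)
  have hcnd : (c < n ∧ n < d) ∨ (d < n ∧ n < c) := by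
    rcases lt_or_ge (c:ℚ) n with h | h
    · left
      refine ⟨h, ?_⟩
      by_contra hnd
      push_neg at hnd
      have h1 : (0:ℝ) < (n:ℝ) - c := by exact_mod_cast sub_pos.mpr (Rat.cast_lt.mpr h)
      have h2 : (0:ℝ) ≤ (n:ℝ) - d := by
        have : (d:ℝ) ≤ (n:ℝ) := by exact_mod_cast hnd
        linarith
      nlinarith
    · right
      rcases lt_or_eq_of_le h with h' | h'
      · refine ⟨?_, h'⟩
        by_contra hnd
        push_neg at hnd
        have h1 : (n:ℝ) < c := by exact_mod_cast h'
        have h2 : (n:ℝ) ≤ d := by exact_mod_cast hnd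
        nlinarith
      · exfalso; rw [h'] at hprod; simp at hprod
  rcases hcnd with ⟨h1, h2⟩ | ⟨h1, h2⟩
  · have := between_den hcd h1 h2
    have := c.den_pos
    have := d.den_pos
    omega
  · have := between_den (fn_symm hcd) h1 h2
    have := c.den_pos
    have := d.den_pos
    omega

/-- Two Farey circles with ordered endpoints either coincide or are disjoint. -/
theorem circle_circle_ord {a b c d : ℚ} (hab : FareyNeighbor (some a) (some b))
    (hcd : FareyNeighbor (some c) (some d)) (hab' : a < b) (hcd' : c < d) :
    fareyGeod (some a) (some b) = fareyGeod (some c) (some d) ∨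
    fareyGeod (some a) (some b) ∩ fareyGeod (some c) (some d) = ∅ := by
  by_cases heq : a = c ∧ b = d
  · left; rw [heq.1, heq.2]
  · right
    rw [Set.eq_empty_iff_forall_notMem]
    rintro z ⟨hz1, hz2⟩
    rw [mem_circle] at hz1 hz2
    obtain ⟨him, e1⟩ := hz1
    obtain ⟨-, e2⟩ := hz2
    set x := z.re
    set y := z.im
    have hy : 0 < y ^ 2 := by positivity
    have hax : (a:ℝ) < x ∧ x < (b:ℝ) := by
      constructor <;> by_contra h <;> push_neg at h
      · have : (x - b) < 0 := by
          have : (a:ℝ) < b := by exact_mod_cast hab'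
          linarith
        nlinarith
      · have : (a:ℝ) < b := by exact_mod_cast hab'
        nlinarith
    have hcx : (c:ℝ) < x ∧ x < (d:ℝ) := by
      constructor <;> by_contra h <;> push_neg at h
      · have : (c:ℝ) < d := by exact_mod_cast hcd'
        nlinarith
      · have : (c:ℝ) < d := by exact_mod_cast hcd'
        nlinarith
    -- no interleaving
    have hni1 : ¬(a < c ∧ b < d) := by
      rintro ⟨h1, h2⟩
      have hcb : c < b := by
        have : (c:ℝ) < b := lt_trans hcx.1 hax.2
        exact_mod_cast this
      exact no_interleave hab hcd h1 hcb h2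
    have hni2 : ¬(c < a ∧ d < b) := by
      rintro ⟨h1, h2⟩
      have hadq : a < d := by
        have : (a:ℝ) < d := lt_trans hax.1 hcx.2
        exact_mod_cast this
      exact no_interleave hcd hab h1 hadq h2
    -- nested cases
    rcases lt_trichotomy a c with h | h | h
    · have hdb : d ≤ b := by by_contra hh; push_neg at hh; exact hni1 ⟨h, hh⟩
      have h1 : (a:ℝ) < c := by exact_mod_cast h
      have h2 : (d:ℝ) ≤ b := by exact_mod_cast hdb
      nlinarith [hax.1, hax.2, hcx.1, hcx.2]
    · subst h
      have hbd : b ≠ d := fun hh => heq ⟨rfl, hh⟩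
      rcases lt_or_gt_of_ne hbd with h' | h'
      · have h2 : (b:ℝ) < d := by exact_mod_cast h'
        nlinarith [hax.1, hax.2, hcx.1, hcx.2]
      · have h2 : (d:ℝ) < b := by exact_mod_cast h'
        nlinarith [hax.1, hax.2, hcx.1, hcx.2]
    · have hbd : b ≤ d := by by_contra hh; push_neg at hh; exact hni2 ⟨h, hh⟩
      have h1 : (c:ℝ) < a := by exact_mod_cast h
      have h2 : (b:ℝ) ≤ d := by exact_mod_cast hbd
      nlinarith [hax.1, hax.2, hcx.1, hcx.2]

theorem circle_circle {a b c d : ℚ} (hab : FareyNeighbor (some a) (some b))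
    (hcd : FareyNeighbor (some c) (some d)) :
    fareyGeod (some a) (some b) = fareyGeod (some c) (some d) ∨
    fareyGeod (some a) (some b) ∩ fareyGeod (some c) (some d) = ∅ := by
  rcases (fn_ne hab).lt_or_gt with h1 | h1 <;>
    rcases (fn_ne hcd).lt_or_gt with h2 | h2
  · exact circle_circle_ord hab hcd h1 h2
  · rcases circle_circle_ord hab (fn_symm hcd) h1 h2 with h | h
    · left; rw [h, geod_symm]
    · right; rw [geod_symm c d]; exact h
  · rcases circle_circle_ord (fn_symm hab) hcd h1 h2 with h | h
    · left; rw [geod_symm, h]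
    · right; rw [geod_symm a b]; exact h
  · rcases circle_circle_ord (fn_symm hab) (fn_symm hcd) h1 h2 with h | h
    · left; rw [geod_symm a b, h, geod_symm]
    · right; rw [geod_symm a b, geod_symm c d]; exact h

theorem line_line (n m : ℚ) :
    ({z : ℂ | 0 < z.im ∧ z.re = (n : ℝ)} : Set ℂ) = {z : ℂ | 0 < z.im ∧ z.re = (m : ℝ)} ∨
    ({z : ℂ | 0 < z.im ∧ z.re = (n : ℝ)} : Set ℂ) ∩ {z : ℂ | 0 < z.im ∧ z.re = (m : ℝ)} = ∅ := by
  by_cases h : n = m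
  · left; rw [h]
  · right
    rw [Set.eq_empty_iff_forall_notMem]
    rintro z ⟨⟨-, h1⟩, ⟨-, h2⟩⟩
    exact h (by exact_mod_cast h1.symm.trans h2)

theorem main_aux (x y x' y' : Option ℚ)
    (hxy : FareyNeighbor x y) (hxy' : FareyNeighbor x' y') :
    fareyGeod x y = fareyGeod x' y' ∨ fareyGeod x y ∩ fareyGeod x' y' = ∅ := by
  rcases x with _ | a <;> rcases y with _ | b <;>
    rcases x' with _ | c <;> rcases y' with _ | d
  · exact (not_fn_inf_inf hxy).elim
  · exact (not_fn_inf_inf hxy).elim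
  · exact (not_fn_inf_inf hxy).elim
  · exact (not_fn_inf_inf hxy).elim
  · exact (not_fn_inf_inf hxy').elim
  · exact line_line b d
  · exact line_line b c
  · exact Or.inr (line_circle (den_one_of_inf_fn hxy) hxy')
  · exact (not_fn_inf_inf hxy').elim
  · exact line_line a d
  · exact line_line a c
  · exact Or.inr (line_circle (den_one_of_fn_inf hxy) hxy')
  · exact (not_fn_inf_inf hxy').elim
  · exact Or.inr (by rw [Set.inter_comm]; exact line_circle (den_one_of_inf_fn hxy') hxy)
  · exact Or.inr (by rw [Set.inter_comm]; exact line_circle (den_one_of_fn_inf hxy') hxy)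
  · exact circle_circle hxy hxy'

end FareyAux

/-- Geodesics joining Farey neighbors never cross: any two of them either coincide, are
disjoint, or meet only at a common endpoint (hence are disjoint in the open upper half
plane). -/
theorem farey_geodesics_do_not_cross (x y x' y' : Option ℚ)
    (hxy : FareyNeighbor x y) (hxy' : FareyNeighbor x' y') :
    fareyGeod x y = fareyGeod x' y' ∨
    fareyGeod x y ∩ fareyGeod x' y' = ∅ ∨
    ((∃ e, e ∈ ({x, y} : Set (Option ℚ)) ∧ e ∈ ({x', y'} : Set (Option ℚ))) ∧
      fareyGeod x y ∩ fareyGeod x' y' = ∅) := by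
  rcases FareyAux.main_aux x y x' y' hxy hxy' with h | h
  · exact Or.inl h
  · exact Or.inr (Or.inl h)
end

section
/- Let ℓ > 0 satisfy the system: cosh(h/2) = coth(ℓ/2), cosh(ℓ'/2) = cosh(h/2)·cosh(t/2) with 0 ≤ t ≤ ℓ/2 and ℓ ≤ ℓ'. Then sinh(ℓ/2) ≤ cosh(ℓ/4), and hence ℓ ≤ 4·arcsinh(1/2). -/
/-- The explicit bound `L₀ = 4 arcsinh(1/2)` for the shortest geodesic on a hyperbolic
punctured torus: if `cosh(h/2) = coth(ℓ/2)`, `cosh(ℓ'/2) = cosh(h/2)·cosh(t/2)` with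
`0 ≤ t ≤ ℓ/2` and `ℓ ≤ ℓ'`, then `sinh(ℓ/2) ≤ cosh(ℓ/4)`, hence `ℓ ≤ 4 arcsinh(1/2)`. -/
theorem shortest_geodesic_bound (ℓ h t ℓ' : ℝ) (hℓ : 0 < ℓ)
    (h1 : Real.cosh (h / 2) = Real.cosh (ℓ / 2) / Real.sinh (ℓ / 2))
    (h2 : Real.cosh (ℓ' / 2) = Real.cosh (h / 2) * Real.cosh (t / 2))
    (ht0 : 0 ≤ t) (ht1 : t ≤ ℓ / 2) (hℓℓ' : ℓ ≤ ℓ') :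
    Real.sinh (ℓ / 2) ≤ Real.cosh (ℓ / 4) ∧ ℓ ≤ 4 * Real.arsinh (1 / 2) := by
  have hs : 0 < Real.sinh (ℓ / 2) := by rw [show (0:ℝ) = Real.sinh 0 from Real.sinh_zero.symm]; exact Real.sinh_lt_sinh.2 (by linarith)
  have hc : 0 < Real.cosh (ℓ / 2) := Real.cosh_pos _
  -- cosh(ℓ/2) ≤ cosh(ℓ'/2)
  have hmono : Real.cosh (ℓ / 2) ≤ Real.cosh (ℓ' / 2) := by
    have := Real.cosh_le_cosh (x := ℓ / 2) (y := ℓ' / 2)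
    rw [this, abs_of_pos (by linarith : (0:ℝ) < ℓ / 2),
      abs_of_pos (by linarith : (0:ℝ) < ℓ' / 2)]
    linarith
  have hct : Real.cosh (t / 2) ≤ Real.cosh (ℓ / 4) := by
    rw [Real.cosh_le_cosh, abs_of_nonneg (by linarith : (0:ℝ) ≤ t / 2),
      abs_of_pos (by linarith : (0:ℝ) < ℓ / 4)]
    linarith
  -- key inequality
  have key : Real.sinh (ℓ / 2) ≤ Real.cosh (ℓ / 4) := by
    have h3 : Real.cosh (ℓ / 2) ≤
        Real.cosh (ℓ / 2) / Real.sinh (ℓ / 2) * Real.cosh (ℓ / 4) := by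
      calc Real.cosh (ℓ / 2) ≤ Real.cosh (ℓ' / 2) := hmono
        _ = Real.cosh (ℓ / 2) / Real.sinh (ℓ / 2) * Real.cosh (t / 2) := by
            rw [h2, h1]
        _ ≤ Real.cosh (ℓ / 2) / Real.sinh (ℓ / 2) * Real.cosh (ℓ / 4) := by
            apply mul_le_mul_of_nonneg_left hct (le_of_lt (div_pos hc hs))
    rw [div_mul_eq_mul_div, le_div_iff₀ hs] at h3
    exact le_of_mul_le_mul_left (by linarith [mul_comm (Real.cosh (ℓ / 2)) (Real.sinh (ℓ / 2))]) hc
  refine ⟨key, ?_⟩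
  have hdbl : Real.sinh (ℓ / 2) = 2 * Real.sinh (ℓ / 4) * Real.cosh (ℓ / 4) := by
    have : ℓ / 2 = 2 * (ℓ / 4) := by ring
    rw [this, Real.sinh_two_mul]
  have hc4 : 0 < Real.cosh (ℓ / 4) := Real.cosh_pos _
  have hs4 : Real.sinh (ℓ / 4) ≤ 1 / 2 := by
    nlinarith [key, hdbl]
  have : ℓ / 4 ≤ Real.arsinh (1 / 2) := by
    have := Real.sinh_le_sinh (x := ℓ / 4) (y := Real.arsinh (1 / 2))
    rw [Real.sinh_arsinh] at this
    exact this.1 hs4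
  linarith
end

section
/- Suppose complex numbers δ, δ₁, δ₂ satisfy sinh²(δ) = -sinh²(δ₁)·sinh²(δ₂). Then |Re δ| ≤ |Re δ₁| + |Re δ₂| + log 3. -/
lemma abs_sinh_upper (z : ℂ) : ‖Complex.sinh z‖ ≤ Real.exp |z.re| := by
  rw [show Complex.sinh z = (Complex.exp z - Complex.exp (-z)) / 2 from rfl]
  calc ‖(Complex.exp z - Complex.exp (-z)) / 2‖
      ≤ (‖Complex.exp z‖ + ‖Complex.exp (-z)‖) / 2 := by
        rw [norm_div]
        simp only [Complex.norm_two]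
        gcongr
        exact (norm_sub_le _ _)
    _ = (Real.exp z.re + Real.exp (-z.re)) / 2 := by
        rw [Complex.norm_exp, Complex.norm_exp, Complex.neg_re]
    _ ≤ Real.exp |z.re| := by
        have h1 : Real.exp z.re ≤ Real.exp |z.re| := Real.exp_le_exp.2 (le_abs_self _)
        have h2 : Real.exp (-z.re) ≤ Real.exp |z.re| := Real.exp_le_exp.2 (neg_le_abs _)
        linarith

lemma abs_sinh_lower (z : ℂ) : (Real.exp |z.re| - 1) / 2 ≤ ‖Complex.sinh z‖ := by
  rw [show Complex.sinh z = (Complex.exp z - Complex.exp (-z)) / 2 from rfl, norm_div]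
  simp only [Complex.norm_two]
  have key : Real.exp |z.re| - 1 ≤ ‖Complex.exp z - Complex.exp (-z)‖ := by
    have h1 : |‖Complex.exp z‖ - ‖Complex.exp (-z)‖| ≤
        ‖Complex.exp z - Complex.exp (-z)‖ := abs_norm_sub_norm_le _ _
    rw [Complex.norm_exp, Complex.norm_exp, Complex.neg_re] at h1
    have h2 : Real.exp |z.re| - 1 ≤ |Real.exp z.re - Real.exp (-z.re)| := by
      rcases abs_cases z.re with ⟨ha, hb⟩ | ⟨ha, hb⟩
      · rw [ha]
        have : Real.exp (-z.re) ≤ 1 := Real.exp_le_one_iff.2 (by linarith)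
        calc Real.exp z.re - 1 ≤ Real.exp z.re - Real.exp (-z.re) := by linarith
          _ ≤ |Real.exp z.re - Real.exp (-z.re)| := le_abs_self _
      · rw [ha]
        have : Real.exp z.re ≤ 1 := Real.exp_le_one_iff.2 (by linarith)
        have h3 : Real.exp (-z.re) - 1 ≤ -(Real.exp z.re - Real.exp (-z.re)) := by linarith
        exact h3.trans (neg_le_abs _)
    linarith
  linarith

/-- If `sinh²δ = -sinh²δ₁ · sinh²δ₂` then `|Re δ| ≤ |Re δ₁| + |Re δ₂| + log 3`. -/
theorem re_bound_of_sinh_sq (δ δ₁ δ₂ : ℂ)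
    (h : Complex.sinh δ ^ 2 = -(Complex.sinh δ₁ ^ 2 * Complex.sinh δ₂ ^ 2)) :
    |δ.re| ≤ |δ₁.re| + |δ₂.re| + Real.log 3 := by
  have habs : ‖Complex.sinh δ‖ =
      ‖Complex.sinh δ₁‖ * ‖Complex.sinh δ₂‖ := by
    have h2 := congrArg (‖·‖) h
    rw [norm_neg, norm_mul, norm_pow, norm_pow, norm_pow] at h2
    have h3 : ‖Complex.sinh δ‖ ^ 2 =
        (‖Complex.sinh δ₁‖ * ‖Complex.sinh δ₂‖) ^ 2 := by
      rw [h2]; ring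
    have h4 := (sq_eq_sq_iff_abs_eq_abs _ _).1 h3
    rwa [abs_of_nonneg (norm_nonneg _),
      abs_of_nonneg (by positivity : (0:ℝ) ≤ ‖Complex.sinh δ₁‖ * ‖Complex.sinh δ₂‖)] at h4
  have l1 := abs_sinh_lower δ
  have u1 := abs_sinh_upper δ₁
  have u2 := abs_sinh_upper δ₂
  have hprod : ‖Complex.sinh δ₁‖ * ‖Complex.sinh δ₂‖ ≤
      Real.exp (|δ₁.re| + |δ₂.re|) := by
    rw [Real.exp_add]
    exact mul_le_mul u1 u2 (norm_nonneg _) (Real.exp_nonneg _)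
  have key : Real.exp |δ.re| ≤ 3 * Real.exp (|δ₁.re| + |δ₂.re|) := by
    have h1 : Real.exp |δ.re| ≤ 2 * Real.exp (|δ₁.re| + |δ₂.re|) + 1 := by
      rw [habs] at l1; linarith
    have h2 : (1 : ℝ) ≤ Real.exp (|δ₁.re| + |δ₂.re|) :=
      Real.one_le_exp (by positivity)
    linarith
  have heq : (3:ℝ) * Real.exp (|δ₁.re| + |δ₂.re|) = Real.exp (|δ₁.re| + |δ₂.re| + Real.log 3) := by
    rw [Real.exp_add (|δ₁.re| + |δ₂.re|) (Real.log 3), Real.exp_log (by norm_num : (0:ℝ) < 3)]; ring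
  exact Real.exp_le_exp.1 (key.trans_eq heq)
end

section
/- In the hyperbolic plane (or in hyperbolic 3-space), for any geodesic triangle with vertices x, y, z and any point p on the side from x to y, the distance from p to the union of the other two sides is at most arcsinh(1). -/
open Set

/-- `γ` is a unit-speed geodesic segment from `x` to `y` (parametrized on `[0, dist x y]`). -/
def IsGeodesicSegment {X : Type*} [MetricSpace X] (γ : ℝ → X) (x y : X) : Prop :=
  γ 0 = x ∧ γ (dist x y) = y ∧
    ∀ s ∈ Icc (0 : ℝ) (dist x y), ∀ t ∈ Icc (0 : ℝ) (dist x y),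
      dist (γ s) (γ t) = |s - t|

open Real

set_option maxHeartbeats 1000000

noncomputable def Phi (z : UpperHalfPlane) : ℝ × ℝ × ℝ :=
  ((Complex.normSq z + 1) / (2 * z.im), z.re / z.im, (Complex.normSq z - 1) / (2 * z.im))

def Bf (u v : ℝ × ℝ × ℝ) : ℝ := u.1 * v.1 - u.2.1 * v.2.1 - u.2.2 * v.2.2


lemma Bf_phi (z w : UpperHalfPlane) : Bf (Phi z) (Phi w) = Real.cosh (dist z w) := by
  rw [UpperHalfPlane.cosh_dist, Complex.dist_eq, Complex.sq_norm]
  have hz : (0:ℝ) < z.im := z.im_pos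
  have hw : (0:ℝ) < w.im := w.im_pos
  simp only [Bf, Phi, Complex.normSq_apply, Complex.sub_re, Complex.sub_im,
    UpperHalfPlane.coe_re, UpperHalfPlane.coe_im]
  field_simp
  ring

lemma Phi_fst_pos (z : UpperHalfPlane) : 0 < (Phi z).1 := by
  have hz : (0:ℝ) < z.im := z.im_pos
  have : (0:ℝ) ≤ Complex.normSq z := Complex.normSq_nonneg _
  simp only [Phi]
  positivity

lemma null_orth_zero (d a : ℝ × ℝ × ℝ) (h1 : Bf d a = 0) (h2 : Bf d d = 0)
    (h3 : Bf a a = 1) (h4 : 0 < a.1) : d = 0 := by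
  obtain ⟨d0, d1, d2⟩ := d
  obtain ⟨a0, a1, a2⟩ := a
  simp only [Bf] at h1 h2 h3 h4 ⊢
  have e1 : d0 * a0 = d1 * a1 + d2 * a2 := by linarith
  have e2 : (d1*a1+d2*a2)^2 + (d1*a2-d2*a1)^2 = (d1^2+d2^2)*(a1^2+a2^2) := by ring
  have e3 : d1^2+d2^2 = d0^2 := by nlinarith [h2]
  have e4 : a1^2+a2^2 = a0^2-1 := by nlinarith [h3]
  have e5 : (d0*a0)^2 = (d1*a1+d2*a2)^2 := by rw [e1]
  have e6 : (d1^2+d2^2)*(a1^2+a2^2) = d0^2*(a0^2-1) := by rw [e3, e4]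
  have h5 : d0^2 ≤ 0 := by nlinarith [e5, e6, e2, sq_nonneg (d1*a2-d2*a1)]
  have hd0 : d0 = 0 := by
    have := le_antisymm h5 (sq_nonneg d0)
    exact sq_eq_zero_iff.mp this
  have hd1 : d1 = 0 := by nlinarith [sq_nonneg d1, sq_nonneg d2]
  have hd2 : d2 = 0 := by nlinarith [sq_nonneg d1, sq_nonneg d2]
  simp [Prod.ext_iff, hd0, hd1, hd2]

lemma geodesic_Bf {γ : ℝ → UpperHalfPlane} {a b : UpperHalfPlane}
    (h : IsGeodesicSegment γ a b) (hd : 0 < dist a b)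
    {t : ℝ} (ht : t ∈ Icc (0:ℝ) (dist a b)) (q : ℝ × ℝ × ℝ) :
    Real.sinh (dist a b) * Bf (Phi (γ t)) q =
      Real.sinh (dist a b - t) * Bf (Phi a) q + Real.sinh t * Bf (Phi b) q := by
  set L := dist a b with hL
  have hsL : 0 < Real.sinh L := Real.sinh_pos_iff.2 hd
  have h0 : (0:ℝ) ∈ Icc (0:ℝ) L := ⟨le_refl _, hd.le⟩
  have hLmem : L ∈ Icc (0:ℝ) L := ⟨hd.le, le_refl _⟩
  have hta : dist (γ t) a = t := by
    have := h.2.2 t ht 0 h0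
    rwa [h.1, sub_zero, abs_of_nonneg ht.1] at this
  have htb : dist (γ t) b = L - t := by
    have := h.2.2 t ht L hLmem
    rwa [h.2.1, abs_of_nonpos (by linarith [ht.2]), neg_sub] at this
  set u : ℝ × ℝ × ℝ := ((Real.sinh (L - t) / Real.sinh L) • Phi a
      + (Real.sinh t / Real.sinh L) • Phi b) with hu
  have hBa : Bf (Phi (γ t)) (Phi a) = Real.cosh t := by rw [Bf_phi, hta]
  have hBb : Bf (Phi (γ t)) (Phi b) = Real.cosh (L - t) := by rw [Bf_phi, htb]
  have hBaa : Bf (Phi a) (Phi a) = 1 := by rw [Bf_phi, dist_self, Real.cosh_zero]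
  have hBbb : Bf (Phi b) (Phi b) = 1 := by rw [Bf_phi, dist_self, Real.cosh_zero]
  have hBab : Bf (Phi a) (Phi b) = Real.cosh L := by rw [Bf_phi]
  have hBba : Bf (Phi b) (Phi a) = Real.cosh L := by
    rw [Bf_phi, dist_comm, ← hL, ← Bf_phi, hBab]
  have hBgg : Bf (Phi (γ t)) (Phi (γ t)) = 1 := by rw [Bf_phi, dist_self, Real.cosh_zero]
  have key : Phi (γ t) = u := by
    set D : ℝ × ℝ × ℝ := Phi (γ t) - u with hD
    have e1 : Bf D (Phi a) = 0 := by
      have expand : Bf D (Phi a) = Bf (Phi (γ t)) (Phi a)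
          - (Real.sinh (L - t) / Real.sinh L) * Bf (Phi a) (Phi a)
          - (Real.sinh t / Real.sinh L) * Bf (Phi b) (Phi a) := by
        simp only [hD, hu, Bf, Prod.fst_sub, Prod.snd_sub, Prod.fst_add, Prod.snd_add,
          Prod.smul_fst, Prod.smul_snd, smul_eq_mul]
        ring
      rw [expand, hBa, hBaa, hBba, Real.sinh_sub]
      field_simp
      nlinarith [Real.cosh_sq L, Real.cosh_sq t]
    have e3 : Bf D D = 0 := by
      have expand : Bf D D = Bf (Phi (γ t)) (Phi (γ t))
          - 2 * ((Real.sinh (L - t) / Real.sinh L) * Bf (Phi (γ t)) (Phi a))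
          - 2 * ((Real.sinh t / Real.sinh L) * Bf (Phi (γ t)) (Phi b))
          + (Real.sinh (L - t) / Real.sinh L)^2 * Bf (Phi a) (Phi a)
          + 2 * ((Real.sinh (L - t) / Real.sinh L) * (Real.sinh t / Real.sinh L) * Bf (Phi a) (Phi b))
          + (Real.sinh t / Real.sinh L)^2 * Bf (Phi b) (Phi b) := by
        simp only [hD, hu, Bf, Prod.fst_sub, Prod.snd_sub, Prod.fst_add, Prod.snd_add,
          Prod.smul_fst, Prod.smul_snd, smul_eq_mul]
        ring
      rw [expand, hBa, hBb, hBaa, hBbb, hBab, hBgg, Real.sinh_sub, Real.cosh_sub]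
      field_simp
      ring_nf
      linear_combination (-(Real.sinh t^2)) * (Real.cosh_sq L) +
        (-(Real.sinh L^2)) * (Real.cosh_sq t)
    have hD0 : D = 0 := null_orth_zero D (Phi a) e1 e3 hBaa (Phi_fst_pos a)
    have := sub_eq_zero.1 hD0
    exact this
  rw [key]
  simp only [hu, Bf, Prod.fst_add, Prod.snd_add, Prod.smul_fst, Prod.smul_snd, smul_eq_mul]
  field_simp
  ring

lemma exists_pt (σ L z0 z1 : ℝ) (hσ : Real.arsinh 1 < σ) (hz0 : Real.sqrt 2 < z0)
    (hz1 : 0 ≤ z1) (hL : 0 ≤ L)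
    (hw : Real.cosh L = Real.cosh σ * z0 + Real.sinh σ * z1) :
    ∃ t ∈ Icc (0:ℝ) L,
      (Real.sinh (L - t) * Real.cosh σ + Real.sinh t * z0) / Real.sinh L ≤ Real.sqrt 2 := by
  have hs2 : Real.sqrt 2 ^ 2 = 2 := Real.sq_sqrt (by norm_num)
  have hs2pos : (1:ℝ) < Real.sqrt 2 := by nlinarith [Real.sqrt_nonneg 2]
  have hσ0 : 0 < σ := lt_of_le_of_lt (Real.arsinh_nonneg_iff.2 (by norm_num)) hσ
  have hA : Real.sqrt 2 < Real.cosh σ := by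
    have : Real.cosh (Real.arsinh 1) < Real.cosh σ := by
      rw [Real.cosh_lt_cosh, abs_of_nonneg (Real.arsinh_nonneg_iff.2 (by norm_num : (0:ℝ) ≤ 1)),
        abs_of_nonneg hσ0.le]
      exact hσ
    rwa [Real.cosh_arsinh, (by norm_num : (1:ℝ) + 1^2 = 2)] at this
  set A := Real.cosh σ with hAdef
  set sh := Real.sinh σ with hshdef
  have hsh : 0 < sh := Real.sinh_pos_iff.2 hσ0
  set w := Real.cosh L with hwdef
  have hz0' : 1 < z0 := lt_trans hs2pos hz0
  have hA1 : 1 < A := lt_trans hs2pos hA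
  have hw2 : 2 < w := by nlinarith [mul_nonneg hsh.le hz1, hs2]
  have hLpos : 0 < L := by
    rcases lt_or_eq_of_le hL with h | h
    · exact h
    · exfalso; rw [hwdef, ← h, Real.cosh_zero] at hw2; linarith
  set S := Real.sinh L with hSdef
  have hS : 0 < S := Real.sinh_pos_iff.2 hLpos
  have hwS : w^2 - S^2 = 1 := by rw [hwdef, hSdef]; exact Real.cosh_sq_sub_sinh_sq L
  obtain ⟨Bc, hBdef⟩ : ∃ b : ℝ, b = (z0 - A * w) / S := ⟨_, rfl⟩
  have hBS : Bc * S = z0 - A * w := by rw [hBdef]; field_simp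
  have hAw : z0 < A * w := by nlinarith [mul_nonneg hsh.le hz1, hs2]
  have hBneg : Bc < 0 := by
    rw [hBdef]; exact div_neg_of_neg_of_pos (by linarith) hS
  have hABpos : 0 < A + Bc := by
    have key : 0 < A * S + Bc * S := by
      rw [hBS]
      -- A*S + z0 - A*w > 0  ⟺  z0 > A*(w-S);  A*(w-S)*(w+S) = A and z0*(w+S) > A
      nlinarith [mul_pos (mul_pos (lt_trans one_pos hA1) hS) hS,
        mul_pos hS hS, mul_pos (lt_trans one_pos hz0') (by linarith : (0:ℝ) < w + S)]
    by_contra hc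
    push_neg at hc
    nlinarith [mul_nonneg (neg_nonneg.2 hc) hS.le]
  have hQ2pos : 0 < A^2 - Bc^2 := by nlinarith
  obtain ⟨Q, hQdef⟩ : ∃ q : ℝ, q = Real.sqrt (A^2 - Bc^2) := ⟨_, rfl⟩
  have hQpos : 0 < Q := hQdef ▸ Real.sqrt_pos.2 hQ2pos
  have hQ2 : Q^2 = A^2 - Bc^2 := hQdef ▸ Real.sq_sqrt hQ2pos.le
  have hmain : A^2 - Bc^2 ≤ 2 := by
    have expand : (A^2 - Bc^2) * S^2 = A^2*(w^2-1) - (z0 - A*w)^2 := by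
      linear_combination (-(A^2)) * hwS + (-(Bc*S + z0 - A*w)) * hBS
    have ineq : A^2 * (w^2-1) - (z0 - A*w)^2 ≤ 2 * (w^2 - 1) := by
      nlinarith [mul_nonneg (mul_nonneg (by linarith : (0:ℝ) ≤ w) hsh.le) hz1, hs2, hw]
    nlinarith [mul_pos hS hS]
  have hQle : Q ≤ Real.sqrt 2 := by
    rw [hQdef]; exact (Real.sqrt_le_sqrt hmain).trans (le_of_eq rfl)
  obtain ⟨t0, ht0def⟩ : ∃ t : ℝ, t = Real.arsinh (-Bc / Q) := ⟨_, rfl⟩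
  have hsinht0 : Real.sinh t0 = -Bc / Q := by rw [ht0def]; exact Real.sinh_arsinh _
  have hcosht0 : Real.cosh t0 = A / Q := by
    rw [ht0def, Real.cosh_arsinh]
    rw [show 1 + (-Bc/Q)^2 = (A/Q)^2 by field_simp; linarith [hQ2]]
    exact Real.sqrt_sq (le_of_lt (div_pos (by linarith) hQpos))
  have ht00 : 0 ≤ t0 := ht0def ▸ Real.arsinh_nonneg_iff.2 (div_nonneg (by linarith) hQpos.le)
  have hk1 : (-Bc) * w ≤ A * S := by
    by_contra hc
    push_neg at hc
    have h1 : A * S * S < (-Bc) * w * S := mul_lt_mul_of_pos_right hc hS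
    -- (-Bc)*S = A*w - z0
    have h2 : (-Bc) * S = A * w - z0 := by linarith [hBS]
    -- so A*S^2 < (A*w - z0)*w,  i.e.  A*(w^2-1) < A*w^2 - z0*w,  i.e.  z0*w < A
    nlinarith [mul_pos (lt_trans one_pos hz0') (by linarith : (0:ℝ) < w),
      mul_lt_mul_of_pos_right hz0' (by linarith : (0:ℝ) < w)]
  have hBcSQ : -Bc ≤ S * Q := by
    have hBw : 0 ≤ (-Bc) * w := mul_nonneg (by linarith) (by linarith)
    have hsq : ((-Bc)*w) * ((-Bc)*w) ≤ (A*S) * (A*S) := mul_self_le_mul_self hBw hk1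
    have hw1 : w^2 = 1 + S^2 := by linarith [hwS]
    have hBw2 : Bc^2*w^2 = Bc^2*(1+S^2) := by rw [hw1]
    have h2 : Bc^2 * (1 + S^2) ≤ A^2 * S^2 := by nlinarith [hsq, hBw2]
    have h3 : Bc^2 ≤ (S*Q)^2 := by
      have hq : (S*Q)^2 = S^2 * (A^2 - Bc^2) := by rw [mul_pow, hQ2]
      rw [hq]
      ring_nf
      ring_nf at h2
      linarith [h2]
    calc -Bc = |Bc| := (abs_of_neg hBneg).symm
      _ = Real.sqrt (Bc^2) := (Real.sqrt_sq_eq_abs _).symm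
      _ ≤ Real.sqrt ((S*Q)^2) := Real.sqrt_le_sqrt h3
      _ = S*Q := Real.sqrt_sq (le_of_lt (mul_pos hS hQpos))
  have ht0L : t0 ≤ L := by
    rw [ht0def, ← Real.arsinh_sinh L]
    apply Real.arsinh_le_arsinh.2
    rw [div_le_iff₀ hQpos]
    calc -Bc ≤ S * Q := hBcSQ
      _ = Real.sinh L * Q := by rw [hSdef]
  refine ⟨t0, ⟨ht00, ht0L⟩, ?_⟩
  have hval : (Real.sinh (L - t0) * A + Real.sinh t0 * z0) / S = Q := by
    rw [Real.sinh_sub, hsinht0, hcosht0, ← hSdef, ← hwdef]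
    rw [div_eq_iff (ne_of_gt hS)]
    have hQne : Q ≠ 0 := hQpos.ne'
    field_simp
    linear_combination (-S)*hQ2 + Bc*hBS
  calc (Real.sinh (L - t0) * Real.cosh σ + Real.sinh t0 * z0) / Real.sinh L
      = (Real.sinh (L - t0) * A + Real.sinh t0 * z0) / S := by rw [hAdef, hSdef]
    _ = Q := hval
    _ ≤ Real.sqrt 2 := hQle


lemma side_case (p v z : UpperHalfPlane) (γ : ℝ → UpperHalfPlane)
    (h : IsGeodesicSegment γ v z) (σ z1 : ℝ)
    (hσ : Real.arsinh 1 < σ) (hpv : dist p v = σ)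
    (hpz : Real.sqrt 2 < Real.cosh (dist p z)) (hz1 : 0 ≤ z1)
    (hw : Real.cosh (dist v z) = Real.cosh σ * Real.cosh (dist p z) + Real.sinh σ * z1) :
    ∃ t ∈ Icc (0:ℝ) (dist v z), dist p (γ t) ≤ Real.arsinh 1 := by
  obtain ⟨t, ht, hft⟩ := exists_pt σ (dist v z) (Real.cosh (dist p z)) z1 hσ hpz hz1 dist_nonneg hw
  refine ⟨t, ht, ?_⟩
  have hr0 : (0:ℝ) ≤ Real.arsinh 1 := Real.arsinh_nonneg_iff.2 (by norm_num)
  have hσ0 : 0 < σ := lt_of_le_of_lt hr0 hσ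
  have hs2pos : (1:ℝ) < Real.sqrt 2 := by nlinarith [Real.sqrt_nonneg 2, Real.sq_sqrt (by norm_num : (0:ℝ) ≤ 2)]
  have hcoshσ : 1 < Real.cosh σ := by
    have := Real.one_lt_cosh.2 hσ0.ne'
    exact this
  have hL : 0 < dist v z := by
    by_contra hc
    push_neg at hc
    have h0 : dist v z = 0 := le_antisymm hc dist_nonneg
    rw [h0, Real.cosh_zero] at hw
    nlinarith [mul_nonneg (Real.sinh_nonneg_iff.2 hσ0.le) hz1]
  have hS : 0 < Real.sinh (dist v z) := Real.sinh_pos_iff.2 hL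
  have hged := geodesic_Bf h hL ht (Phi p)
  have h1 : Bf (Phi v) (Phi p) = Real.cosh σ := by rw [Bf_phi, dist_comm, hpv]
  have h2 : Bf (Phi z) (Phi p) = Real.cosh (dist p z) := by rw [Bf_phi, dist_comm]
  have h3 : Bf (Phi (γ t)) (Phi p) = Real.cosh (dist p (γ t)) := by rw [Bf_phi, dist_comm]
  rw [h1, h2, h3] at hged
  have hcosh : Real.cosh (dist p (γ t)) ≤ Real.sqrt 2 := by
    have heq : Real.cosh (dist p (γ t)) =
        (Real.sinh (dist v z - t) * Real.cosh σ + Real.sinh t * Real.cosh (dist p z)) /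
          Real.sinh (dist v z) := by
      rw [eq_div_iff hS.ne']
      linarith [hged]
    rw [heq]
    exact hft
  have hfin : Real.cosh (dist p (γ t)) ≤ Real.cosh (Real.arsinh 1) := by
    rw [Real.cosh_arsinh]
    have : Real.sqrt (1 + 1^2) = Real.sqrt 2 := by norm_num
    rw [this]
    exact hcosh
  have := Real.cosh_le_cosh.1 hfin
  rwa [abs_of_nonneg dist_nonneg, abs_of_nonneg hr0] at this


/-- Triangles in the hyperbolic plane are `arsinh 1`-thin: for any geodesic triangle with
vertices `x, y, z` and any point `p` on the side from `x` to `y`, the distance from `p`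
to the union of the other two sides is at most `arcsinh 1 = log(1 + √2)`. -/
theorem hyperbolic_triangles_are_thin (x y z : UpperHalfPlane)
    (γ₁ γ₂ γ₃ : ℝ → UpperHalfPlane)
    (h₁ : IsGeodesicSegment γ₁ x y) (h₂ : IsGeodesicSegment γ₂ x z)
    (h₃ : IsGeodesicSegment γ₃ y z)
    (s : ℝ) (hs : s ∈ Icc (0 : ℝ) (dist x y)) :
    Metric.infDist (γ₁ s)
      (γ₂ '' Icc (0 : ℝ) (dist x z) ∪ γ₃ '' Icc (0 : ℝ) (dist y z)) ≤ Real.arsinh 1 := by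
  set d := dist x y with hddef
  have hr0 : (0:ℝ) ≤ Real.arsinh 1 := Real.arsinh_nonneg_iff.2 (by norm_num)
  have hpx : dist (γ₁ s) x = s := by
    have := h₁.2.2 s hs 0 ⟨le_refl _, hs.1.trans hs.2⟩
    rwa [h₁.1, sub_zero, abs_of_nonneg hs.1] at this
  have hpy : dist (γ₁ s) y = d - s := by
    have := h₁.2.2 s hs d ⟨hs.1.trans hs.2, le_refl _⟩
    rwa [h₁.2.1, abs_of_nonpos (by linarith [hs.2]), neg_sub] at this
  by_cases c1 : s ≤ Real.arsinh 1
  · have hmem : x ∈ γ₂ '' Icc (0:ℝ) (dist x z) := ⟨0, ⟨le_refl _, dist_nonneg⟩, h₂.1⟩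
    calc Metric.infDist (γ₁ s) (γ₂ '' Icc (0:ℝ) (dist x z) ∪ γ₃ '' Icc (0:ℝ) (dist y z))
        ≤ dist (γ₁ s) x := Metric.infDist_le_dist_of_mem (mem_union_left _ hmem)
      _ = s := hpx
      _ ≤ Real.arsinh 1 := c1
  by_cases c2 : d - s ≤ Real.arsinh 1
  · have hmem : y ∈ γ₃ '' Icc (0:ℝ) (dist y z) := ⟨0, ⟨le_refl _, dist_nonneg⟩, h₃.1⟩
    calc Metric.infDist (γ₁ s) (γ₂ '' Icc (0:ℝ) (dist x z) ∪ γ₃ '' Icc (0:ℝ) (dist y z))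
        ≤ dist (γ₁ s) y := Metric.infDist_le_dist_of_mem (mem_union_right _ hmem)
      _ = d - s := hpy
      _ ≤ Real.arsinh 1 := c2
  by_cases c3 : dist (γ₁ s) z ≤ Real.arsinh 1
  · have hmem : z ∈ γ₂ '' Icc (0:ℝ) (dist x z) :=
      ⟨dist x z, ⟨dist_nonneg, le_refl _⟩, h₂.2.1⟩
    calc Metric.infDist (γ₁ s) (γ₂ '' Icc (0:ℝ) (dist x z) ∪ γ₃ '' Icc (0:ℝ) (dist y z))
        ≤ dist (γ₁ s) z := Metric.infDist_le_dist_of_mem (mem_union_left _ hmem)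
      _ ≤ Real.arsinh 1 := c3
  push_neg at c1 c2 c3
  have hcoshr : Real.cosh (Real.arsinh 1) = Real.sqrt 2 := by
    rw [Real.cosh_arsinh]; norm_num
  have hpz2 : Real.sqrt 2 < Real.cosh (dist (γ₁ s) z) := by
    rw [← hcoshr]
    apply Real.cosh_lt_cosh.2
    rwa [abs_of_nonneg hr0, abs_of_nonneg dist_nonneg]
  have hsd : s < d := by linarith
  have hd : 0 < d := by linarith
  have hs0 : 0 < s := lt_of_le_of_lt hr0 c1
  have hsinh_s : 0 < Real.sinh s := Real.sinh_pos_iff.2 hs0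
  set z0 := Real.cosh (dist (γ₁ s) z) with hz0def
  obtain ⟨z1, hz1def⟩ : ∃ b : ℝ, b = (Real.cosh s * z0 - Real.cosh (dist x z)) / Real.sinh s :=
    ⟨_, rfl⟩
  have hwxe : Real.cosh (dist x z) = Real.cosh s * z0 - Real.sinh s * z1 := by
    rw [hz1def]; field_simp; ring
  have hId : Real.sinh d * z0 =
      Real.sinh (d - s) * Real.cosh (dist x z) + Real.sinh s * Real.cosh (dist y z) := by
    have hg := geodesic_Bf h₁ hd hs (Phi z)
    rw [Bf_phi, Bf_phi, Bf_phi] at hg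
    rw [hz0def]
    have e1 : dist (γ₁ s) z = dist (γ₁ s) z := rfl
    linarith [hg]
  have hsinhadd : Real.sinh d = Real.sinh (d - s) * Real.cosh s + Real.cosh (d - s) * Real.sinh s := by
    rw [← Real.sinh_add]; norm_num
  have hwye : Real.cosh (dist y z) = Real.cosh (d - s) * z0 + Real.sinh (d - s) * z1 := by
    have hmul : Real.sinh s * Real.cosh (dist y z) =
        Real.sinh s * (Real.cosh (d - s) * z0 + Real.sinh (d - s) * z1) := by
      linear_combination -hId - Real.sinh (d - s) * hwxe + z0 * hsinhadd
    exact mul_left_cancel₀ hsinh_s.ne' hmul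
  rcases le_or_gt z1 0 with hz1s | hz1s
  · obtain ⟨t, ht, hdist⟩ := side_case (γ₁ s) x z γ₂ h₂ s (-z1) c1 hpx hpz2 (by linarith)
      (by rw [hwxe]; ring)
    have hmem : γ₂ t ∈ γ₂ '' Icc (0:ℝ) (dist x z) := ⟨t, ht, rfl⟩
    calc Metric.infDist (γ₁ s) (γ₂ '' Icc (0:ℝ) (dist x z) ∪ γ₃ '' Icc (0:ℝ) (dist y z))
        ≤ dist (γ₁ s) (γ₂ t) := Metric.infDist_le_dist_of_mem (mem_union_left _ hmem)
      _ ≤ Real.arsinh 1 := hdist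
  · obtain ⟨t, ht, hdist⟩ := side_case (γ₁ s) y z γ₃ h₃ (d - s) z1 c2 hpy hpz2 hz1s.le
      (by rw [hwye])
    have hmem : γ₃ t ∈ γ₃ '' Icc (0:ℝ) (dist y z) := ⟨t, ht, rfl⟩
    calc Metric.infDist (γ₁ s) (γ₂ '' Icc (0:ℝ) (dist x z) ∪ γ₃ '' Icc (0:ℝ) (dist y z))
        ≤ dist (γ₁ s) (γ₃ t) := Metric.infDist_le_dist_of_mem (mem_union_right _ hmem)
      _ ≤ Real.arsinh 1 := hdist
end

section
/- Let Γ be a torsion-free discrete subgroup of PSL₂(ℂ). Then m-th roots in Γ are unique: if g, h ∈ Γ, m ≥ 1, and gᵐ = hᵐ, then g = h. -/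
local notation "SL2C" => Matrix.SpecialLinearGroup (Fin 2) ℂ

/-- The topology on `SL(2,ℂ)` induced from the space of matrices. -/
noncomputable instance : TopologicalSpace SL2C :=
  TopologicalSpace.induced (fun A => (A : Matrix (Fin 2) (Fin 2) ℂ)) inferInstance

/-- `PSL(2,ℂ)`, the quotient of `SL(2,ℂ)` by its center. -/
abbrev PSL2C := SL2C ⧸ Subgroup.center SL2C



open Matrix

lemma mem_span_of_commute (C A : Matrix (Fin 2) (Fin 2) ℂ)
    (hC : ¬ ∃ r : ℂ, C = r • (1 : Matrix (Fin 2) (Fin 2) ℂ))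
    (hAC : A * C = C * A) :
    ∃ x y : ℂ, A = x • (1 : Matrix (Fin 2) (Fin 2) ℂ) + y • C := by
  set a := C 0 0 with ha; set b := C 0 1 with hb; set c := C 1 0 with hc; set d := C 1 1 with hd
  set p := A 0 0 with hp; set q := A 0 1 with hq; set r := A 1 0 with hr; set s := A 1 1 with hs
  have e00 : p * a + q * c = a * p + b * r := by
    have := congrFun (congrFun hAC 0) 0
    simpa [Matrix.mul_apply, Fin.sum_univ_two] using this
  have e01 : p * b + q * d = a * q + b * s := by
    have := congrFun (congrFun hAC 0) 1
    simpa [Matrix.mul_apply, Fin.sum_univ_two] using this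
  have e10 : r * a + s * c = c * p + d * r := by
    have := congrFun (congrFun hAC 1) 0
    simpa [Matrix.mul_apply, Fin.sum_univ_two] using this
  by_cases hb0 : b = 0
  · by_cases hc0 : c = 0
    · have had : a ≠ d := by
        intro had
        exact hC ⟨a, by
          ext i j
          fin_cases i <;> fin_cases j <;>
            simp [Matrix.one_apply, ← ha, ← hb, ← hc, ← hd, hb0, hc0, had]⟩
      have hsub : a - d ≠ 0 := sub_ne_zero.mpr had
      have hq0 : q = 0 := by
        have h1 : q * (d - a) = 0 := by
          rw [hb0] at e01; linear_combination e01
        rcases mul_eq_zero.mp h1 with h | h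
        · exact h
        · exact absurd (sub_eq_zero.mp h).symm had
      have hr0 : r = 0 := by
        have h1 : r * (a - d) = 0 := by
          rw [hc0] at e10; linear_combination e10
        rcases mul_eq_zero.mp h1 with h | h
        · exact h
        · exact absurd (sub_eq_zero.mp h) had
      refine ⟨p - ((p - s) / (a - d)) * a, (p - s) / (a - d), ?_⟩
      ext i j
      fin_cases i <;> fin_cases j
      · simp [Matrix.one_apply, ← ha, ← hp]
      · simp [Matrix.one_apply, ← hb, ← hq, hb0, hq0]
      · simp [Matrix.one_apply, ← hc, ← hr, hc0, hr0]
      · simp [Matrix.one_apply, ← hd, ← hs]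
        field_simp
        ring
    · refine ⟨p - (r / c) * a, r / c, ?_⟩
      ext i j
      fin_cases i <;> fin_cases j
      · simp [Matrix.one_apply, ← ha, ← hp]
      · simp [Matrix.one_apply, ← hb, ← hq]
        field_simp
        linear_combination e00
      · simp [Matrix.one_apply, ← hc, ← hr]
        field_simp
      · simp [Matrix.one_apply, ← hd, ← hs]
        field_simp
        linear_combination e10
  · refine ⟨p - (q / b) * a, q / b, ?_⟩
    ext i j
    fin_cases i <;> fin_cases j
    · simp [Matrix.one_apply, ← ha, ← hp]
    · simp [Matrix.one_apply, ← hb, ← hq]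
      field_simp
    · simp [Matrix.one_apply, ← hc, ← hr]
      field_simp
      linear_combination -e00
    · simp [Matrix.one_apply, ← hd, ← hs]
      field_simp
      linear_combination -e01

lemma sq_eq_neg_one_of_trace_zero (K : Matrix (Fin 2) (Fin 2) ℂ)
    (htr : Matrix.trace K = 0) (hdet : K.det = 1) : K * K = -1 := by
  rw [Matrix.trace_fin_two] at htr
  rw [Matrix.det_fin_two] at hdet
  ext i j
  fin_cases i <;> fin_cases j <;>
    simp [Matrix.mul_apply, Fin.sum_univ_two, Matrix.one_apply]
  · linear_combination K 0 0 * htr - hdet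
  · linear_combination K 0 1 * htr
  · linear_combination K 1 0 * htr
  · linear_combination K 1 1 * htr - hdet

lemma span_commute (K A B : Matrix (Fin 2) (Fin 2) ℂ)
    (hA : ∃ x y : ℂ, A = x • (1 : Matrix (Fin 2) (Fin 2) ℂ) + y • K)
    (hB : ∃ x y : ℂ, B = x • (1 : Matrix (Fin 2) (Fin 2) ℂ) + y • K) :
    A * B = B * A := by
  obtain ⟨x, y, rfl⟩ := hA
  obtain ⟨x', y', rfl⟩ := hB
  simp only [Matrix.add_mul, Matrix.mul_add, Matrix.smul_mul, Matrix.mul_smul, smul_smul,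
    smul_add, one_mul, mul_one]
  module

-- SL-level: if images in PSL commute and K is not a PSL-involution lift, then honest commutation
lemma sl_commute (A K : SL2C)
    (hK2 : (K : Matrix (Fin 2) (Fin 2) ℂ) * (K : Matrix (Fin 2) (Fin 2) ℂ) ≠ -1)
    (hmem : (A * K)⁻¹ * (K * A) ∈ Subgroup.center SL2C) :
    (K : Matrix (Fin 2) (Fin 2) ℂ) * (A : Matrix (Fin 2) (Fin 2) ℂ)
      = (A : Matrix (Fin 2) (Fin 2) ℂ) * (K : Matrix (Fin 2) (Fin 2) ℂ) := by
  obtain ⟨r, hr2, hsc⟩ := Matrix.SpecialLinearGroup.mem_center_iff.mp hmem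
  simp only [Fintype.card_fin] at hr2
  have hKA : (K : Matrix (Fin 2) (Fin 2) ℂ) * (A : Matrix (Fin 2) (Fin 2) ℂ) = (A : Matrix (Fin 2) (Fin 2) ℂ) * (K : Matrix (Fin 2) (Fin 2) ℂ) * (r • 1) := by
    have h1 : ((A * K) * ((A * K)⁻¹ * (K * A)) : SL2C) = (K * A : SL2C) := by group
    have h2 : (((A * K)⁻¹ * (K * A) : SL2C) : Matrix (Fin 2) (Fin 2) ℂ) = r • 1 := by
      rw [← hsc]
      simp [Matrix.scalar, Matrix.smul_one_eq_diagonal]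
    calc (K : Matrix (Fin 2) (Fin 2) ℂ) * (A : Matrix (Fin 2) (Fin 2) ℂ) = ((K * A : SL2C) : Matrix (Fin 2) (Fin 2) ℂ) := rfl
      _ = (((A * K) * ((A * K)⁻¹ * (K * A)) : SL2C) : Matrix (Fin 2) (Fin 2) ℂ) := by rw [h1]
      _ = (A : Matrix (Fin 2) (Fin 2) ℂ) * (K : Matrix (Fin 2) (Fin 2) ℂ) * (r • 1) := by
          rw [Matrix.SpecialLinearGroup.coe_mul, h2, Matrix.SpecialLinearGroup.coe_mul]
  have hr : r = 1 ∨ r = -1 := by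
    have : (r - 1) * (r + 1) = 0 := by linear_combination hr2
    rcases mul_eq_zero.mp this with h | h
    · exact Or.inl (by linear_combination h)
    · exact Or.inr (by linear_combination h)
  rcases hr with rfl | rfl
  · simpa using hKA
  · exfalso
    apply hK2
    have hinv : (A : Matrix (Fin 2) (Fin 2) ℂ) * (A : Matrix (Fin 2) (Fin 2) ℂ)⁻¹ = 1 :=
      Matrix.mul_nonsing_inv _ (by rw [A.prop]; exact isUnit_one)
    have hK : (K : Matrix (Fin 2) (Fin 2) ℂ)
        = -((A : Matrix (Fin 2) (Fin 2) ℂ) * (K : Matrix (Fin 2) (Fin 2) ℂ) * (A : Matrix (Fin 2) (Fin 2) ℂ)⁻¹) := by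
      calc (K : Matrix (Fin 2) (Fin 2) ℂ)
          = (K : Matrix (Fin 2) (Fin 2) ℂ) * ((A : Matrix (Fin 2) (Fin 2) ℂ) * (A : Matrix (Fin 2) (Fin 2) ℂ)⁻¹) := by rw [hinv, mul_one]
        _ = ((K : Matrix (Fin 2) (Fin 2) ℂ) * (A : Matrix (Fin 2) (Fin 2) ℂ)) * (A : Matrix (Fin 2) (Fin 2) ℂ)⁻¹ := by rw [mul_assoc]
        _ = -((A : Matrix (Fin 2) (Fin 2) ℂ) * (K : Matrix (Fin 2) (Fin 2) ℂ) * (A : Matrix (Fin 2) (Fin 2) ℂ)⁻¹) := by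
            rw [hKA]; simp
    have htr : Matrix.trace (K : Matrix (Fin 2) (Fin 2) ℂ) = 0 := by
      have h1 : Matrix.trace (K : Matrix (Fin 2) (Fin 2) ℂ)
          = -Matrix.trace ((A : Matrix (Fin 2) (Fin 2) ℂ) * (K : Matrix (Fin 2) (Fin 2) ℂ) * (A : Matrix (Fin 2) (Fin 2) ℂ)⁻¹) := by
        rw [← Matrix.trace_neg, ← hK]
      have h2 : Matrix.trace ((A : Matrix (Fin 2) (Fin 2) ℂ) * (K : Matrix (Fin 2) (Fin 2) ℂ) * (A : Matrix (Fin 2) (Fin 2) ℂ)⁻¹)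
          = Matrix.trace (K : Matrix (Fin 2) (Fin 2) ℂ) := by
        rw [Matrix.trace_mul_comm, ← mul_assoc, Matrix.nonsing_inv_mul _ (by rw [A.prop]; exact isUnit_one), one_mul]
      rw [h2] at h1
      linear_combination h1/2
    exact sq_eq_neg_one_of_trace_zero _ htr K.prop

lemma psl_comm (k a b : PSL2C) (hk : k ≠ 1) (hk2 : k * k ≠ 1)
    (hak : a * k = k * a) (hbk : b * k = k * b) : a * b = b * a := by
  obtain ⟨K, rfl⟩ := QuotientGroup.mk_surjective k
  obtain ⟨A, rfl⟩ := QuotientGroup.mk_surjective a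
  obtain ⟨B, rfl⟩ := QuotientGroup.mk_surjective b
  -- K is non-scalar
  have hKns : ¬ ∃ r : ℂ, (K : Matrix (Fin 2) (Fin 2) ℂ) = r • (1 : Matrix (Fin 2) (Fin 2) ℂ) := by
    rintro ⟨r, hr⟩
    apply hk
    rw [QuotientGroup.eq_one_iff]
    refine Matrix.SpecialLinearGroup.mem_center_iff.mpr ⟨r, ?_, ?_⟩
    · have := K.prop
      rw [hr] at this
      simpa [Matrix.det_smul] using this
    · rw [Matrix.scalar_apply, ← Matrix.smul_one_eq_diagonal, ← hr]
  -- K*K ≠ -1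
  have hK2 : (K : Matrix (Fin 2) (Fin 2) ℂ) * (K : Matrix (Fin 2) (Fin 2) ℂ) ≠ -1 := by
    intro hKK
    apply hk2
    show (QuotientGroup.mk (K * K) : PSL2C) = 1
    rw [QuotientGroup.eq_one_iff]
    refine Matrix.SpecialLinearGroup.mem_center_iff.mpr ⟨-1, by norm_num, ?_⟩
    rw [Matrix.scalar_apply, ← Matrix.smul_one_eq_diagonal]
    rw [Matrix.SpecialLinearGroup.coe_mul, hKK]
    simp
  have hmemA : (A * K)⁻¹ * (K * A) ∈ Subgroup.center SL2C := by
    rw [← QuotientGroup.eq]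
    exact hak
  have hmemB : (B * K)⁻¹ * (K * B) ∈ Subgroup.center SL2C := by
    rw [← QuotientGroup.eq]
    exact hbk
  have hA := sl_commute A K hK2 hmemA
  have hB := sl_commute B K hK2 hmemB
  have hAB : (A : Matrix (Fin 2) (Fin 2) ℂ) * (B : Matrix (Fin 2) (Fin 2) ℂ)
      = (B : Matrix (Fin 2) (Fin 2) ℂ) * (A : Matrix (Fin 2) (Fin 2) ℂ) :=
    span_commute K _ _ (mem_span_of_commute _ _ hKns (hA.symm))
      (mem_span_of_commute _ _ hKns (hB.symm))
  have : A * B = B * A := Subtype.ext hAB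
  show (QuotientGroup.mk (A * B) : PSL2C) = QuotientGroup.mk (B * A)
  rw [this]

/-- In a torsion-free discrete subgroup `Γ ≤ PSL₂(ℂ)`, `m`-th roots are unique:
if `gᵐ = hᵐ` with `m ≥ 1` then `g = h`. -/
theorem kleinian_unique_roots (Γ : Subgroup PSL2C)
    (hdisc : DiscreteTopology Γ)
    (htf : ∀ g : Γ, ∀ n : ℕ, 0 < n → g ^ n = 1 → g = 1)
    (g h : Γ) (m : ℕ) (hm : 1 ≤ m) (heq : g ^ m = h ^ m) :
    g = h := by
  by_cases hg1 : g = 1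
  · subst hg1
    have : h ^ m = 1 := by rw [← heq]; simp
    exact (htf h m hm this).symm
  -- k := g ^ m ≠ 1, k² ≠ 1
  have hk1 : g ^ m ≠ 1 := fun hc => hg1 (htf g m hm hc)
  have hk2 : (g ^ m) * (g ^ m) ≠ 1 := by
    intro hc
    exact hg1 (htf g (m + m) (by omega) (by rw [pow_add]; exact hc))
  have hcomm : g * h = h * g := by
    have hker : Function.Injective (Subgroup.subtype Γ) := Subgroup.subtype_injective Γ
    apply hker
    simp only [_root_.map_mul]
    refine psl_comm ((g : PSL2C) ^ m) _ _ ?_ ?_ ?_ ?_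
    · intro hc
      apply hk1
      apply hker
      simpa using hc
    · intro hc
      apply hk2
      apply hker
      simpa using hc
    · exact (Commute.pow_right (Commute.refl (g : PSL2C)) m)
    · have : ((h : PSL2C)) ^ m = ((g : PSL2C)) ^ m := by
        have := congrArg (Subgroup.subtype Γ) heq
        simpa using this.symm
      rw [← this]
      exact (Commute.pow_right (Commute.refl (h : PSL2C)) m)
  -- (g⁻¹ * h)^m = 1
  have hc : Commute g h := hcomm
  have hpow : (g⁻¹ * h) ^ m = 1 := by
    rw [hc.inv_left.mul_pow, inv_pow, heq, inv_mul_cancel]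
  have := htf _ m hm hpow
  exact inv_mul_eq_one.mp this
end

section
/- Let T₁ be the square torus ℂ/(ℤ + iℤ) (area 1), T₂ = ℂ/Λ₂ a Euclidean torus of area at least A₀ > 0, and h: T₁ → T₂ an L-Lipschitz map of degree 1. Then h is homotopic to a K-quasiconformal (indeed K-bilipschitz affine) homeomorphism, where K depends only on L and A₀. -/
open Complex

/-- Let `T₁ = ℂ/(ℤ + iℤ)` be the square torus and `T₂ = ℂ/Λ₂` a Euclidean torus of area at
least `A₀`, where `Λ₂` is spanned by a (positively oriented) basis `ω₁, ω₂`.  Any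
`L`-Lipschitz degree-1 map `h : T₁ → T₂` — presented by an equivariant lift `H : ℂ → ℂ`
with periods `u, v ∈ Λ₂` inducing an orientation-preserving isomorphism of lattices —
is homotopic (through equivariant maps) to an affine homeomorphism `z ↦ az + b z̄ (+c)`
which is `K`-quasiconformal, i.e. `|b| < |a|` and `|a| + |b| ≤ K (|a| - |b|)`, where `K`
depends only on `L` and `A₀`. -/
theorem lipschitz_torus_map_qc_affine (L A₀ : ℝ) (hL : 0 < L) (hA₀ : 0 < A₀) :
    ∃ K : ℝ, 1 ≤ K ∧
      ∀ (ω₁ ω₂ u v : ℂ) (H : ℂ → ℂ),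
        Continuous H →
        LipschitzWith (Real.toNNReal L) H →
        A₀ ≤ ((starRingEnd ℂ) ω₁ * ω₂).im →
        (∀ z, H (z + 1) = H z + u) →
        (∀ z, H (z + Complex.I) = H z + v) →
        u ∈ AddSubgroup.closure ({ω₁, ω₂} : Set ℂ) →
        v ∈ AddSubgroup.closure ({ω₁, ω₂} : Set ℂ) →
        ((starRingEnd ℂ) u * v).im = ((starRingEnd ℂ) ω₁ * ω₂).im →
        ∃ a b : ℂ,
          a + b = u ∧ Complex.I * (a - b) = v ∧
          ‖b‖ < ‖a‖ ∧
          ‖a‖ + ‖b‖ ≤ K * (‖a‖ - ‖b‖) ∧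
          ∃ F : ℝ × ℂ → ℂ, Continuous F ∧
            (∀ z, F (0, z) = H z) ∧
            (∀ z, F (1, z) = a * z + b * (starRingEnd ℂ) z) ∧
            (∀ t z, F (t, z + 1) = F (t, z) + u) ∧
            (∀ t z, F (t, z + Complex.I) = F (t, z) + v) := by
  refine ⟨max 1 (4 * L ^ 2 / A₀), le_max_left _ _, ?_⟩
  intro ω₁ ω₂ u v H hHc hHL hArea hu hv humem hvmem hdet
  set a : ℂ := (u - Complex.I * v) / 2 with ha_def
  set b : ℂ := (u + Complex.I * v) / 2 with hb_def
  have hab : a + b = u := by rw [ha_def, hb_def]; ring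
  have hIv : Complex.I * (a - b) = v := by
    rw [ha_def, hb_def]
    have h1 : (u - Complex.I * v) / 2 - (u + Complex.I * v) / 2 = -Complex.I * v := by ring
    rw [h1, ← mul_assoc]
    simp [Complex.I_mul_I]
  -- area identity: |a|^2 - |b|^2 = Im(conj u * v)
  have harea : ‖a‖ ^ 2 - ‖b‖ ^ 2 = ((starRingEnd ℂ) u * v).im := by
    rw [← hab, ← hIv]
    rw [Complex.sq_norm, Complex.sq_norm, Complex.normSq_apply, Complex.normSq_apply]
    simp only [Complex.mul_im, Complex.mul_re, Complex.add_re, Complex.add_im,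
      Complex.sub_re, Complex.sub_im, Complex.conj_re, Complex.conj_im,
      Complex.I_re, Complex.I_im]
    ring
  have hA : A₀ ≤ ‖a‖ ^ 2 - ‖b‖ ^ 2 := by
    rw [harea, hdet]; exact hArea
  have hb_lt_a : ‖b‖ < ‖a‖ := by
    nlinarith [norm_nonneg a, norm_nonneg b]
  -- period norms bounded by L
  have hu_norm : ‖u‖ ≤ L := by
    have h1 : H (0 + 1) = H 0 + u := hu 0
    have h2 := hHL.dist_le_mul (0 + 1) 0
    rw [Complex.dist_eq, Complex.dist_eq, h1] at h2
    simpa [Real.coe_toNNReal _ hL.le] using h2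
  have hv_norm : ‖v‖ ≤ L := by
    have h1 : H (0 + Complex.I) = H 0 + v := hv 0
    have h2 := hHL.dist_le_mul (0 + Complex.I) 0
    rw [Complex.dist_eq, Complex.dist_eq, h1] at h2
    simpa [Real.coe_toNNReal _ hL.le] using h2
  have hsum : ‖a‖ + ‖b‖ ≤ 2 * L := by
    have ha_le : ‖a‖ ≤ (‖u‖ + ‖v‖) / 2 := by
      rw [ha_def, norm_div]
      have : ‖u - Complex.I * v‖ ≤ ‖u‖ + ‖v‖ := by
        calc ‖u - Complex.I * v‖
            ≤ ‖u‖ + ‖Complex.I * v‖ := norm_sub_le u _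
          _ = ‖u‖ + ‖v‖ := by simp
      have h2 : ‖(2:ℂ)‖ = 2 := by norm_num
      rw [h2]
      linarith
    have hb_le : ‖b‖ ≤ (‖u‖ + ‖v‖) / 2 := by
      rw [hb_def, norm_div]
      have : ‖u + Complex.I * v‖ ≤ ‖u‖ + ‖v‖ := by
        calc ‖u + Complex.I * v‖
            ≤ ‖u‖ + ‖Complex.I * v‖ := norm_add_le u _
          _ = ‖u‖ + ‖v‖ := by simp
      have h2 : ‖(2:ℂ)‖ = 2 := by norm_num
      rw [h2]
      linarith
    nlinarith
  have hK : ‖a‖ + ‖b‖ ≤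
      max 1 (4 * L ^ 2 / A₀) * (‖a‖ - ‖b‖) := by
    have h1 : ‖a‖ + ‖b‖ ≤
        (4 * L ^ 2 / A₀) * (‖a‖ - ‖b‖) := by
      rw [div_mul_eq_mul_div, le_div_iff₀ hA₀]
      have hsd : A₀ ≤ (‖a‖ + ‖b‖) * (‖a‖ - ‖b‖) := by
        nlinarith [hA]
      have hs0 : 0 ≤ ‖a‖ + ‖b‖ :=
        add_nonneg (norm_nonneg a) (norm_nonneg b)
      have hd0 : 0 ≤ ‖a‖ - ‖b‖ := by linarith
      have hss : (‖a‖ + ‖b‖) * (‖a‖ + ‖b‖) ≤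
          (2 * L) * (2 * L) := mul_le_mul hsum hsum hs0 (by linarith)
      nlinarith [hsd, hss, hs0, hd0]
    exact h1.trans (mul_le_mul_of_nonneg_right (le_max_right _ _) (by linarith))
  refine ⟨a, b, hab, hIv, hb_lt_a, hK,
    fun p => (1 - p.1 : ℝ) • H p.2 + (p.1 : ℝ) • (a * p.2 + b * (starRingEnd ℂ) p.2),
    ?_, ?_, ?_, ?_, ?_⟩
  · apply Continuous.add
    · exact (continuous_const.sub continuous_fst).smul (hHc.comp continuous_snd)
    · exact continuous_fst.smul
        ((continuous_const.mul continuous_snd).add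
          (continuous_const.mul (Complex.continuous_conj.comp continuous_snd)))
  · intro z; simp
  · intro z; simp
  · intro t z
    dsimp only
    rw [hu z]
    have hc : (starRingEnd ℂ) (z + 1) = (starRingEnd ℂ) z + 1 := by simp
    rw [hc]
    simp only [Complex.real_smul, Complex.ofReal_sub, Complex.ofReal_one]
    linear_combination (t : ℂ) * hab
  · intro t z
    dsimp only
    rw [hv z]
    have hc : (starRingEnd ℂ) (z + Complex.I) = (starRingEnd ℂ) z - Complex.I := by
      simp [Complex.conj_I, sub_eq_add_neg]
    rw [hc]
    simp only [Complex.real_smul, Complex.ofReal_sub, Complex.ofReal_one]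
    linear_combination (t : ℂ) * hIv
end

section
/- Let tr_k = a·e^{kλ/2} + d·e^{-kλ/2} for complex constants a, d and λ = ℓ + iθ with ℓ ≥ ε₃ > 0. Suppose there exist constants c₂ > 0 and T such that |tr_k| ≥ c₂ for all k ∈ ℤ, and |tr_0| ≤ T, |tr_w| ≤ T for some integer w. Then |w| ≤ W(ε₃, c₂, T) for an explicit bound W depending only on ε₃, c₂, T. -/
open Complex

private lemma re_helper (lam : ℂ) (n : ℤ) :
    (((n : ℂ)) * lam / 2).re = (n : ℝ) * lam.re / 2 := by
  have h : ((n : ℂ)) * lam / 2 = ((((n : ℝ) / 2 : ℝ)) : ℂ) * lam := by push_cast; ring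
  rw [h, Complex.re_ofReal_mul]; ring

private lemma tri_helper (a d z : ℂ) :
    ‖a * Complex.exp z + d * Complex.exp (-z)‖ ≤
      ‖a‖ * Real.exp z.re + ‖d‖ * Real.exp (-z.re) := by
  calc ‖a * Complex.exp z + d * Complex.exp (-z)‖
      ≤ ‖a * Complex.exp z‖ + ‖d * Complex.exp (-z)‖ :=
        norm_add_le _ _
    _ = ‖a‖ * Real.exp z.re + ‖d‖ * Real.exp (-z.re) := by
        rw [norm_mul, norm_mul, Complex.norm_exp, Complex.norm_exp, Complex.neg_re]

set_option maxHeartbeats 1000000 in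
private lemma core_bound (ε₃ c₂ T : ℝ) (hε : 0 < ε₃) (hc : 0 < c₂) (hT : 0 < T)
    (a d lam : ℂ) (w : ℤ) (hw0 : 0 ≤ w) (hre : ε₃ ≤ lam.re)
    (hlow : ∀ k : ℤ, c₂ ≤
        ‖a * Complex.exp ((k : ℂ) * lam / 2) +
          d * Complex.exp (-((k : ℂ) * lam / 2))‖)
    (h0 : ‖a + d‖ ≤ T)
    (hwT : ‖a * Complex.exp ((w : ℂ) * lam / 2) +
        d * Complex.exp (-((w : ℂ) * lam / 2))‖ ≤ T) :
    (w : ℝ) ≤ 16 / ε₃ * Real.log (1 + 9 * T / c₂) + 16 / ε₃ + 4 := by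
  by_contra hcon
  push_neg at hcon
  set L := Real.log (1 + 9 * T / c₂) with hLdef
  have hL0 : 0 ≤ L := Real.log_nonneg (le_add_of_nonneg_right (by positivity))
  set r := lam.re with hrdef
  have hr : 0 < r := lt_of_lt_of_le hε hre
  have h16 : 0 < 16 / ε₃ := by positivity
  have hw4 : (4 : ℝ) < (w : ℝ) := by nlinarith [mul_nonneg h16.le hL0]
  -- multiply hcon by ε₃
  have h1 : (16 / ε₃ * L + 16 / ε₃ + 4) * ε₃ < (w : ℝ) * ε₃ :=
    mul_lt_mul_of_pos_right hcon hε
  have h2 : (16 / ε₃ * L + 16 / ε₃ + 4) * ε₃ = 16 * L + 16 + 4 * ε₃ := by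
    field_simp
  have hwε : 16 * L + 16 + 4 * ε₃ < (w : ℝ) * ε₃ := by rw [← h2]; exact h1
  have hwr : 16 * L + 16 + 4 * ε₃ ≤ (w : ℝ) * r := by
    have : (w : ℝ) * ε₃ ≤ (w : ℝ) * r :=
      mul_le_mul_of_nonneg_left hre (by linarith)
    linarith
  set m := Real.exp ((w : ℝ) * r / 2) with hmdef
  have hm2 : 2 ≤ m := by
    have h3 : (8 : ℝ) ≤ (w : ℝ) * r / 2 := by linarith
    have h4 := Real.add_one_le_exp ((w : ℝ) * r / 2)
    linarith
  have hm0 : 0 < m := Real.exp_pos _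
  set e := Complex.exp ((w : ℂ) * lam / 2) with hedef
  have hme : ‖e‖ = m := by
    rw [hedef, Complex.norm_exp, re_helper]
  have hene : e ≠ 0 := Complex.exp_ne_zero _
  have hinv : Complex.exp (-((w : ℂ) * lam / 2)) = e⁻¹ := Complex.exp_neg _
  rw [hinv] at hwT
  -- identity giving bound on |a|
  have hid : a * (e ^ 2 - 1) = (a * e + d * e⁻¹) * e - (a + d) := by
    field_simp; ring
  have hsq : m ^ 2 ≤ ‖e ^ 2 - 1‖ + 1 := by
    have h5 : ‖e ^ 2‖ ≤ ‖e ^ 2 - 1‖ + ‖(1 : ℂ)‖ := by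
      have h6 : e ^ 2 = (e ^ 2 - 1) + 1 := by ring
      calc ‖e ^ 2‖ = ‖(e ^ 2 - 1) + 1‖ := by rw [← h6]
        _ ≤ _ := norm_add_le _ _
    have h7 : ‖e ^ 2‖ = m ^ 2 := by rw [norm_pow, hme]
    simp only [norm_one] at h5
    linarith [h7 ▸ h5]
  have ha1 : ‖a‖ * (m ^ 2 - 1) ≤ T * m + T := by
    have h8 : ‖a * (e ^ 2 - 1)‖ ≤ T * m + T := by
      rw [hid]
      calc ‖(a * e + d * e⁻¹) * e - (a + d)‖
          ≤ ‖(a * e + d * e⁻¹) * e‖ + ‖a + d‖ := by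
            rw [sub_eq_add_neg]
            refine le_trans (norm_add_le _ _) ?_
            rw [norm_neg]
        _ = ‖a * e + d * e⁻¹‖ * m + ‖a + d‖ := by
            rw [norm_mul, hme]
        _ ≤ T * m + T := by
            have := mul_le_mul_of_nonneg_right hwT hm0.le
            linarith
    rw [norm_mul] at h8
    have h9 : ‖a‖ * (m ^ 2 - 1) ≤ ‖a‖ * ‖e ^ 2 - 1‖ :=
      mul_le_mul_of_nonneg_left (by linarith) (norm_nonneg _)
    linarith
  have hanneg : 0 ≤ ‖a‖ := norm_nonneg _
  have hmm : m + 1 ≤ m ^ 2 - 1 := by nlinarith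
  have haT : ‖a‖ ≤ T := by
    have h10 : ‖a‖ * (m + 1) ≤ ‖a‖ * (m ^ 2 - 1) :=
      mul_le_mul_of_nonneg_left hmm hanneg
    have h11 : ‖a‖ * (m + 1) ≤ T * (m + 1) := by linarith [ha1]
    exact le_of_mul_le_mul_right h11 (by linarith)
  have ham : ‖a‖ * m ≤ 2 * T := by
    have h12 : ‖a‖ * m * m ≤ 2 * T * m := by nlinarith [ha1, haT, hm2, hT]
    exact le_of_mul_le_mul_right h12 (by linarith)
  have hd : ‖d‖ ≤ 2 * T := by
    have h13 : ‖d‖ ≤ ‖a + d‖ + ‖a‖ := by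
      have h14 : d = (a + d) + (-a) := by ring
      calc ‖d‖ = ‖(a + d) + (-a)‖ := by rw [← h14]
        _ ≤ ‖a + d‖ + ‖-a‖ := norm_add_le _ _
        _ = ‖a + d‖ + ‖a‖ := by rw [norm_neg]
    linarith
  -- choose k = w / 2
  set k : ℤ := w / 2 with hkdef
  have hwz : (2 : ℤ) ≤ w := by
    have : (2 : ℝ) ≤ (w : ℝ) := by linarith
    exact_mod_cast this
  have hk1 : (2 : ℤ) * k ≤ w := by omega
  have hk3 : w ≤ 4 * k := by omega
  have hk1R : (k : ℝ) * r ≤ (w : ℝ) * r / 2 := by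
    have : (2 : ℝ) * (k : ℝ) ≤ (w : ℝ) := by exact_mod_cast hk1
    nlinarith
  have hk3R : (w : ℝ) * r / 4 ≤ (k : ℝ) * r := by
    have : (w : ℝ) ≤ 4 * (k : ℝ) := by exact_mod_cast hk3
    nlinarith
  -- bound tr_k from above
  have htri := tri_helper a d ((k : ℂ) * lam / 2)
  rw [re_helper] at htri
  have hlk := hlow k
  have hterm1 : ‖a‖ * Real.exp ((k : ℝ) * r / 2) ≤
      2 * T * Real.exp (-((w : ℝ) * r / 4)) := by
    have hE : Real.exp ((k : ℝ) * r / 2) =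
        m * Real.exp ((k : ℝ) * r / 2 - (w : ℝ) * r / 2) := by
      rw [hmdef, ← Real.exp_add]; ring_nf
    have hle : Real.exp ((k : ℝ) * r / 2 - (w : ℝ) * r / 2) ≤
        Real.exp (-((w : ℝ) * r / 4)) := Real.exp_le_exp.mpr (by linarith)
    calc ‖a‖ * Real.exp ((k : ℝ) * r / 2)
        = (‖a‖ * m) * Real.exp ((k : ℝ) * r / 2 - (w : ℝ) * r / 2) := by
          rw [hE]; ring
      _ ≤ (2 * T) * Real.exp (-((w : ℝ) * r / 4)) := by
          apply mul_le_mul ham hle (Real.exp_pos _).le (by linarith)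
  have hterm2 : ‖d‖ * Real.exp (-((k : ℝ) * r / 2)) ≤
      2 * T * Real.exp (-((w : ℝ) * r / 8)) := by
    have hle : Real.exp (-((k : ℝ) * r / 2)) ≤ Real.exp (-((w : ℝ) * r / 8)) :=
      Real.exp_le_exp.mpr (by linarith)
    apply mul_le_mul hd hle (Real.exp_pos _).le (by linarith)
  have hcomb : c₂ ≤ 4 * T * Real.exp (-((w : ℝ) * r / 8)) := by
    have hee : Real.exp (-((w : ℝ) * r / 4)) ≤ Real.exp (-((w : ℝ) * r / 8)) := by
      apply Real.exp_le_exp.mpr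
      nlinarith [hwr, hL0, hε]
    calc c₂ ≤ ‖a‖ * Real.exp ((k : ℝ) * r / 2) +
          ‖d‖ * Real.exp (-((k : ℝ) * r / 2)) := le_trans hlk htri
      _ ≤ 2 * T * Real.exp (-((w : ℝ) * r / 4)) +
          2 * T * Real.exp (-((w : ℝ) * r / 8)) := by linarith
      _ ≤ 4 * T * Real.exp (-((w : ℝ) * r / 8)) := by nlinarith [Real.exp_pos (-((w : ℝ) * r / 8)), hT]
  have hfin : c₂ ≤ 4 * T * Real.exp (-((w : ℝ) * ε₃ / 8)) := by
    have : Real.exp (-((w : ℝ) * r / 8)) ≤ Real.exp (-((w : ℝ) * ε₃ / 8)) := by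
      apply Real.exp_le_exp.mpr
      have : (w : ℝ) * ε₃ ≤ (w : ℝ) * r := mul_le_mul_of_nonneg_left hre (by linarith)
      linarith
    nlinarith [hT, hcomb]
  -- derive contradiction
  have hEL : Real.exp L = 1 + 9 * T / c₂ := Real.exp_log (by positivity)
  have hlt : L < (w : ℝ) * ε₃ / 8 := by linarith
  have h9 : 4 * T / c₂ < Real.exp ((w : ℝ) * ε₃ / 8) := by
    have hTc : 0 < T / c₂ := by positivity
    have := Real.exp_lt_exp.mpr hlt
    rw [hEL] at this
    have h4T : 4 * T / c₂ < 1 + 9 * T / c₂ := by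
      have : 4 * (T / c₂) < 1 + 9 * (T / c₂) := by linarith
      linarith [this, (by ring : 4 * T / c₂ = 4 * (T / c₂)),
        (by ring : 9 * T / c₂ = 9 * (T / c₂))]
    linarith
  have hexps : 0 < Real.exp ((w : ℝ) * ε₃ / 8) := Real.exp_pos _
  have h10 : c₂ * Real.exp ((w : ℝ) * ε₃ / 8) ≤ 4 * T := by
    have := hfin
    rw [Real.exp_neg] at this
    calc c₂ * Real.exp ((w : ℝ) * ε₃ / 8)
        ≤ (4 * T * (Real.exp ((w : ℝ) * ε₃ / 8))⁻¹) * Real.exp ((w : ℝ) * ε₃ / 8) :=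
          mul_le_mul_of_nonneg_right this hexps.le
      _ = 4 * T := by field_simp
  have h11 : c₂ * (4 * T / c₂) < c₂ * Real.exp ((w : ℝ) * ε₃ / 8) :=
    mul_lt_mul_of_pos_left h9 hc
  rw [mul_div_cancel₀ _ (ne_of_gt hc)] at h11
  linarith

/-- Trace growth bounds pivot widths: if `tr_k = a e^{kλ/2} + d e^{-kλ/2}` with
`Re λ ≥ ε₃ > 0`, `|tr_k| ≥ c₂ > 0` for all `k ∈ ℤ`, and `|tr_0|, |tr_w| ≤ T`, then
`|w| ≤ W(ε₃, c₂, T)` for a bound depending only on `ε₃, c₂, T`. -/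
theorem trace_growth_bounds_width (ε₃ c₂ T : ℝ) (hε : 0 < ε₃) (hc : 0 < c₂) (hT : 0 < T) :
    ∃ W : ℝ, ∀ (a d lam : ℂ) (w : ℤ),
      ε₃ ≤ lam.re →
      (∀ k : ℤ, c₂ ≤
        ‖a * Complex.exp ((k : ℂ) * lam / 2) +
          d * Complex.exp (-((k : ℂ) * lam / 2))‖) →
      ‖a + d‖ ≤ T →
      ‖a * Complex.exp ((w : ℂ) * lam / 2) +
        d * Complex.exp (-((w : ℂ) * lam / 2))‖ ≤ T →
      |(w : ℝ)| ≤ W := by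
  refine ⟨16 / ε₃ * Real.log (1 + 9 * T / c₂) + 16 / ε₃ + 4, ?_⟩
  intro a d lam w hre hlow h0 hwT
  rcases le_or_gt 0 w with hw0 | hw0
  · have hwR : (0 : ℝ) ≤ (w : ℝ) := by exact_mod_cast hw0
    rw [_root_.abs_of_nonneg hwR]
    exact core_bound ε₃ c₂ T hε hc hT a d lam w hw0 hre hlow h0 hwT
  · -- negative case : apply core to (d, a, -w)
    have hswap : ∀ k : ℤ, c₂ ≤
        ‖d * Complex.exp ((k : ℂ) * lam / 2) +
          a * Complex.exp (-((k : ℂ) * lam / 2))‖ := by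
      intro k
      have h := hlow (-k)
      have e1 : (((-k : ℤ)) : ℂ) * lam / 2 = -((k : ℂ) * lam / 2) := by push_cast; ring
      rw [e1, neg_neg] at h
      rw [add_comm]
      exact h
    have h0' : ‖d + a‖ ≤ T := by rw [add_comm]; exact h0
    have hwT' : ‖d * Complex.exp (((-w : ℤ) : ℂ) * lam / 2) +
        a * Complex.exp (-(((-w : ℤ) : ℂ) * lam / 2))‖ ≤ T := by
      have e1 : (((-w : ℤ)) : ℂ) * lam / 2 = -((w : ℂ) * lam / 2) := by push_cast; ring
      rw [e1, neg_neg, add_comm]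
      exact hwT
    have := core_bound ε₃ c₂ T hε hc hT d a lam (-w) (by omega) hre hswap h0' hwT'
    have hwR : (w : ℝ) < 0 := by exact_mod_cast hw0
    rw [_root_.abs_of_neg hwR]
    push_cast at this
    linarith
end
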